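/- For all integers k ≥ 1 and i ≥ 0, Σ_{r=0}^{k} (−1)^r (C(i+2r, r) − C(i+2r, r−1)) · C(i+k+r, k−r) = 0, where C(n,m) = 0 whenever m < 0 or m > n. -/

import Mathlib

/-!
Since `(i+r+1) (C(i+2r, r) - C(i+2r, r-1)) = (i+1) C(i+2r, r)`, one checks with two
ratio identities of binomial coefficients that `k (i+k+1)` times the `r`-th summand is
`G(r+1) - G(r)` for Gosper's certificate `G(r) = -(-1)^r r (i+1) C(i+2r, r) C(i+k+r, i+2r)`.
As `G(0) = G(k+1) = 0`, the sum telescopes to zero.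
-/

open Finset

/-- Binomial coefficient `C(n,m)` with the convention that it is `0`
whenever `m < 0` or `m > n`. -/
def chooseZ (n : ℕ) (m : ℤ) : ℤ := if 0 ≤ m then (n.choose m.toNat : ℤ) else 0

lemma chooseZ_natCast (n m : ℕ) : chooseZ n m = n.choose m := by
  simp [chooseZ]

namespace Nat

lemma choose_mul_add_one_mul_add_two (n r : ℕ) :
    n.choose r * ((n + 1) * (n + 2)) = (n + 2).choose (r + 1) * ((r + 1) * (n + 1 - r)) := by
  have h₁ := choose_mul_succ_eq n r
  have h₂ := add_one_mul_choose_eq (n + 1) r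
  calc n.choose r * ((n + 1) * (n + 2)) = (n + 2) * ((n + 1).choose r * (n + 1 - r)) := by
        rw [← h₁]; ring
    _ = (n + 2).choose (r + 1) * ((r + 1) * (n + 1 - r)) := by
        rw [← mul_assoc, h₂]; ring

lemma succ_choose_add_two_mul (n m : ℕ) :
    (n + 1).choose (m + 2) * ((m + 1) * (m + 2)) = n.choose m * ((n + 1) * (n - m)) := by
  have h₁ := choose_succ_right_eq n m
  have h₂ := add_one_mul_choose_eq n (m + 1)
  calc (n + 1).choose (m + 2) * ((m + 1) * (m + 2))
      = (n + 1).choose (m + 1 + 1) * (m + 1 + 1) * (m + 1) := by ring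
    _ = (n + 1) * (n.choose (m + 1) * (m + 1)) := by rw [← h₂, mul_assoc]
    _ = n.choose m * ((n + 1) * (n - m)) := by rw [h₁]; ring

end Nat

def ballot (i r : ℕ) : ℤ := chooseZ (i + 2 * r) r - chooseZ (i + 2 * r) ((r : ℤ) - 1)

lemma add_add_one_mul_ballot (i r : ℕ) :
    ((i : ℤ) + r + 1) * ballot i r = (i + 1) * (i + 2 * r).choose r := by
  rcases r with _ | s
  · simp [ballot, chooseZ]
  · have h : ((s + 1 : ℕ) : ℤ) - 1 = s := by push_cast; ring
    have hrec := Nat.choose_succ_right_eq (i + 2 * (s + 1)) s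
    rw [show i + 2 * (s + 1) - s = i + s + 2 by omega] at hrec
    have hrecZ : ((i + 2 * (s + 1)).choose (s + 1) : ℤ) * (s + 1)
        = (i + 2 * (s + 1)).choose s * (i + s + 2) := by exact_mod_cast hrec
    rw [ballot, h, chooseZ_natCast, chooseZ_natCast]
    push_cast
    linear_combination hrecZ

-- `C(i+k+r, i+2r)` rather than `C(i+k+r, k-r)`: it vanishes at `r = k+1`, where `k - r` truncates.
def antidifference (i k r : ℕ) : ℤ :=
  -(-1) ^ r * r * (i + 1) * (i + 2 * r).choose r * (i + k + r).choose (i + 2 * r)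

lemma mul_summand_eq_antidifference_sub (i k r : ℕ) (hr : r ≤ k) :
    (k : ℤ) * (i + k + 1) * ((-1) ^ r * ballot i r * (i + k + r).choose (i + 2 * r)) =
      antidifference i k (r + 1) - antidifference i k r := by
  have hA := add_add_one_mul_ballot i r
  have hB := Nat.choose_mul_add_one_mul_add_two (i + 2 * r) r
  rw [show i + 2 * r + 2 = i + 2 * (r + 1) by ring, show i + 2 * r + 1 - r = i + r + 1 by omega]
    at hB
  have hC := Nat.succ_choose_add_two_mul (i + k + r) (i + 2 * r)
  rw [show i + k + r + 1 = i + k + (r + 1) by ring, show i + 2 * r + 2 = i + 2 * (r + 1) by ring,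
    show i + k + r - (i + 2 * r) = k - r by omega] at hC
  have hBZ : ((i + 2 * r).choose r : ℤ) * ((i + 2 * r + 1) * (i + 2 * r + 2)) =
      (i + 2 * (r + 1)).choose (r + 1) * ((r + 1) * (i + r + 1)) := by exact_mod_cast hB
  have hCZ : ((i + k + (r + 1)).choose (i + 2 * (r + 1)) : ℤ) *
      ((i + 2 * r + 1) * (i + 2 * r + 2)) =
      (i + k + r).choose (i + 2 * r) * ((i + k + r + 1) * ((k : ℤ) - r)) := by
    rw [← Nat.cast_sub hr]; exact_mod_cast hC
  apply mul_left_cancel₀ (show (i : ℤ) + r + 1 ≠ 0 by positivity)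
  simp only [antidifference]
  push_cast
  linear_combination (k * (i + k + 1) * (-1) ^ r * (i + k + r).choose (i + 2 * r) : ℤ) * hA
    + ((-1) ^ r * (i + 1) * (i + k + (r + 1)).choose (i + 2 * (r + 1)) : ℤ) * hBZ
    - ((-1) ^ r * (i + 1) * (i + 2 * r).choose r : ℤ) * hCZ

lemma mul_sum_summand_eq_zero (i k : ℕ) :
    (k : ℤ) * (i + k + 1) *
      ∑ r ∈ range (k + 1), (-1) ^ r * ballot i r * (i + k + r).choose (i + 2 * r) = 0 := by
  rw [mul_sum, sum_congr rfl fun r hr =>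
    mul_summand_eq_antidifference_sub i k r (Nat.lt_succ_iff.1 (mem_range.1 hr)), sum_range_sub]
  simp [antidifference, Nat.choose_eq_zero_of_lt (by omega : i + k + (k + 1) < i + 2 * (k + 1))]

theorem catalan_triangle_identity_two :
    ∀ k i : ℕ, 1 ≤ k →
      ∑ r ∈ Finset.range (k + 1), (-1 : ℤ) ^ r *
        (chooseZ (i + 2 * r) (r : ℤ) - chooseZ (i + 2 * r) ((r : ℤ) - 1)) *
        ((i + k + r).choose (k - r) : ℤ) = 0 := by
  intro k i hk
  have hsymm : ∀ r ∈ range (k + 1), (i + k + r).choose (k - r) = (i + k + r).choose (i + 2 * r) :=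
    fun r hr => Nat.choose_symm_of_eq_add (by have := mem_range.1 hr; omega)
  rw [sum_congr rfl fun r hr => by rw [hsymm r hr]]
  have hk' : (0 : ℤ) < k := by exact_mod_cast hk
  exact (mul_eq_zero.1 (mul_sum_summand_eq_zero i k)).resolve_left (by positivity)
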